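/- Let q, r, k be positive integers, set B = q(r-1)+k, and let a : ℕ → ℚ and Y ∈ ℚ⟦X⟧ be as in the context. Then Y satisfies the first-order differential equation (1 - B·Y^{r-1}·X^{r-1+k}) · X · Y' = ((q-1) + (B·(r+k)/r)·Y^{r-1}·X^{r-1+k}) · Y in ℚ⟦X⟧, where Y' denotes the formal derivative of Y. (Equivalently, (1 - (q(r-1)+k)·Y^{r-1}X^{r-1+k})·dY/Y = ((q-1) + (q(r-1)+k)(r+k)/r · Y^{r-1}X^{r-1+k})·dX/X.) -/

import Mathlib

/-!
Put `Z = ∑ (B b + q) a(b) Xᵇ / b!`, so that `Y = X^(q-1) Z(X^B)`. Read off coefficientwise, the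
cut-and-join recursion says exactly `Z^r = r ∑ a(b+1) Xᵇ / b!`, hence the compressed equation
`r Z' = B X (Z^r)' + (B + q) Z^r`. Substituting `X ↦ X^B` and multiplying by `X^(q-1)` turns it
into `r (X Y' - (q-1) Y) = B X^(r-1+k) (X (Y^r)' + (r+k) Y^r)`, the exponents matching because
`(q-1) + B = (r-1+k) + r(q-1)` and `B + q = r(q-1) + r + k`; expanding `(Y^r)' = r Y^(r-1) Y'`
gives the stated equation.
-/

open PowerSeries Finset Nat

namespace PowerSeries

section CommSemiring

variable {R : Type*} [CommSemiring R]

theorem coeff_pow_eq_sum_antidiagonalTuple (f : R⟦X⟧) (r n : ℕ) :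
    coeff n (f ^ r) = ∑ t ∈ Nat.antidiagonalTuple r n, ∏ j, coeff (t j) f := by
  classical
  rw [← Fin.prod_const, coeff_prod, ← piAntidiag_univ_fin_eq_antidiagonalTuple, finsuppAntidiag,
    sum_map, ← sum_attach (piAntidiag _ _)]
  rfl

theorem coeff_natCast_mul (m n : ℕ) (f : R⟦X⟧) :
    coeff n ((m : R⟦X⟧) * f) = m * coeff n f := by
  rw [← map_natCast (C (R := R)), coeff_C_mul]

theorem coeff_X_mul_derivative (f : R⟦X⟧) (n : ℕ) :
    coeff n (X * d⁄dX R f) = n * coeff n f := by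
  cases n with
  | zero => simp
  | succ n => rw [coeff_succ_X_mul, coeff_derivative, mul_comm, Nat.cast_succ]

theorem X_mul_derivative_X_pow_mul (m : ℕ) (f : R⟦X⟧) :
    X * d⁄dX R (X ^ m * f) = X ^ m * ((m : R⟦X⟧) * f + X * d⁄dX R f) := by
  ext n
  rw [coeff_X_mul_derivative, coeff_X_pow_mul', coeff_X_pow_mul']
  split_ifs with h
  · rw [map_add, coeff_natCast_mul, coeff_X_mul_derivative, ← add_mul, ← Nat.cast_add,
      Nat.add_sub_cancel' h]
  · rw [mul_zero]

end CommSemiring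

section CommRing

variable {R : Type*} [CommRing R]

theorem X_mul_derivative_expand (p : ℕ) (hp : p ≠ 0) (f : R⟦X⟧) :
    X * d⁄dX R (expand p hp f) = (p : R⟦X⟧) * expand p hp (X * d⁄dX R f) := by
  rw [expand_apply, derivative_subst (HasSubst.X_pow hp), ← expand_apply p hp, map_mul,
    expand_X p hp, derivative_pow, derivative_X, mul_one, ← mul_pow_sub_one hp X]
  ring

theorem X_mul_derivative_X_pow_mul_expand (m p : ℕ) (hp : p ≠ 0) (f : R⟦X⟧) :
    X * d⁄dX R (X ^ m * expand p hp f) =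
      X ^ m *
        ((m : R⟦X⟧) * expand p hp f + (p : R⟦X⟧) * X ^ p * expand p hp (d⁄dX R f)) := by
  rw [X_mul_derivative_X_pow_mul, X_mul_derivative_expand, map_mul, expand_X, ← mul_assoc]

theorem eq_X_pow_mul_expand_mk {f : R⟦X⟧} {p m : ℕ} {c : ℕ → R} (hp : p ≠ 0)
    (hc : ∀ b, coeff (p * b + m) f = c b)
    (hzero : ∀ n, (∀ b, n ≠ p * b + m) → coeff n f = 0) :
    f = X ^ m * expand p hp (mk c) := by
  ext n
  rw [coeff_X_pow_mul', coeff_expand]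
  by_cases hn : ∃ b, n = p * b + m
  · obtain ⟨b, rfl⟩ := hn
    simp [hc, hp]
  · push Not at hn
    rw [hzero n hn]
    split_ifs with hmn hdvd
    · exact absurd (by rw [Nat.mul_div_cancel' hdvd, Nat.sub_add_cancel hmn]) (hn ((n - m) / p))
    · rfl
    · rfl

end CommRing

end PowerSeries

section CutAndJoin

variable {K : Type*} [Field K]

noncomputable def weightedEGF (B q : ℕ) (a : ℕ → K) : K⟦X⟧ :=
  mk fun n => ((B * n + q : ℕ) : K) * a n / n !

variable [CharZero K] {q r B : ℕ} {a : ℕ → K}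

theorem coeff_weightedEGF_pow_of_cutAndJoin (hr : r ≠ 0)
    (harec : ∀ b : ℕ, 1 ≤ b → a b = (1 / r : K) *
      ∑ t ∈ Finset.Nat.antidiagonalTuple r (b - 1),
        (((b - 1)! : K) / ∏ j, ((t j)! : K)) * ∏ j, (((B * t j + q : ℕ) : K) * a (t j)))
    (b : ℕ) :
    coeff b (weightedEGF B q a ^ r) = r * a (b + 1) / b ! := by
  rw [coeff_pow_eq_sum_antidiagonalTuple, harec (b + 1) (Nat.le_add_left 1 b),
    Nat.add_sub_cancel, ← mul_assoc, mul_one_div_cancel (Nat.cast_ne_zero.mpr hr), one_mul,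
    sum_div]
  refine sum_congr rfl fun t _ => ?_
  have hfact (n : ℕ) : (n ! : K) ≠ 0 := Nat.cast_ne_zero.mpr n.factorial_ne_zero
  simp only [weightedEGF, coeff_mk, prod_div_distrib]
  field_simp [hfact b]

theorem natCast_mul_derivative_weightedEGF
    (hpow : ∀ b, coeff b (weightedEGF B q a ^ r) = r * a (b + 1) / b !) :
    (r : K⟦X⟧) * d⁄dX K (weightedEGF B q a) =
      (B : K⟦X⟧) * (X * d⁄dX K (weightedEGF B q a ^ r)) +
        ((B + q : ℕ) : K⟦X⟧) * weightedEGF B q a ^ r := by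
  ext b
  rw [map_add, coeff_natCast_mul, coeff_natCast_mul, coeff_natCast_mul, coeff_X_mul_derivative,
    coeff_derivative, hpow, weightedEGF, coeff_mk, Nat.factorial_succ]
  have hfact : (b ! : K) ≠ 0 := Nat.cast_ne_zero.mpr b.factorial_ne_zero
  push_cast
  field_simp
  ring

end CutAndJoin

theorem natCast_mul_X_mul_derivative_sub_of_eq_X_pow_mul_expand {R : Type*} [CommRing R]
    {q r k B : ℕ} (hq : 0 < q) (hr : 0 < r) (hB : B = q * (r - 1) + k) (hB0 : B ≠ 0)
    {Z : R⟦X⟧}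
    (hZ : (r : R⟦X⟧) * d⁄dX R Z =
      (B : R⟦X⟧) * (X * d⁄dX R (Z ^ r)) + ((B + q : ℕ) : R⟦X⟧) * Z ^ r)
    {Y : R⟦X⟧} (hY : Y = X ^ (q - 1) * expand B hB0 Z) :
    (r : R⟦X⟧) * (X * d⁄dX R Y - ((q - 1 : ℕ) : R⟦X⟧) * Y) =
      (B : R⟦X⟧) * X ^ (r - 1 + k) *
        (X * d⁄dX R (Y ^ r) + ((r + k : ℕ) : R⟦X⟧) * Y ^ r) := by
  obtain ⟨p, rfl⟩ : ∃ p, q = p + 1 := ⟨q - 1, by omega⟩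
  obtain ⟨s, rfl⟩ : ∃ s, r = s + 1 := ⟨r - 1, by omega⟩
  simp only [Nat.add_sub_cancel] at hB hY ⊢
  set E := expand (R := R) B hB0
  have hYpow : Y ^ (s + 1) = X ^ ((s + 1) * p) * E (Z ^ (s + 1)) := by
    rw [hY, mul_pow, ← pow_mul, map_pow, mul_comm p]
  have hEZ : ((s + 1 : ℕ) : R⟦X⟧) * E (d⁄dX R Z) =
      (B : R⟦X⟧) * (X ^ B * E (d⁄dX R (Z ^ (s + 1)))) +
        ((B + (p + 1) : ℕ) : R⟦X⟧) * E (Z ^ (s + 1)) := by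
    have hEX : E X = X ^ B := expand_X B hB0
    simpa only [map_mul, map_add, map_natCast, hEX] using congrArg E hZ
  have hexp : (X : R⟦X⟧) ^ p * X ^ B = X ^ (s + k) * X ^ ((s + 1) * p) := by
    rw [← pow_add, ← pow_add, hB]
    ring_nf
  have hcoef :
      ((B + (p + 1) : ℕ) : R⟦X⟧) = ((s + 1) * p : ℕ) + ((s + 1 + k : ℕ) : R⟦X⟧) := by
    rw [hB]
    push_cast
    ring
  rw [hYpow, X_mul_derivative_X_pow_mul_expand, hY, X_mul_derivative_X_pow_mul_expand]
  linear_combination ((B : R⟦X⟧) * X ^ p * X ^ B) * hEZ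
    + ((B : R⟦X⟧) * ((B : R⟦X⟧) * X ^ B * E (d⁄dX R (Z ^ (s + 1)))
        + ((B + (p + 1) : ℕ) : R⟦X⟧) * E (Z ^ (s + 1)))) * hexp
    + ((B : R⟦X⟧) * X ^ (s + k) * X ^ ((s + 1) * p) * E (Z ^ (s + 1))) * hcoef

theorem leaky_ode_of_natCast_mul_X_mul_derivative_sub {K : Type*} [Field K] [CharZero K]
    {q r k B : ℕ} (hq : 0 < q) (hr : 0 < r) {Y : K⟦X⟧}
    (hsym : (r : K⟦X⟧) * (X * d⁄dX K Y - ((q - 1 : ℕ) : K⟦X⟧) * Y) =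
      (B : K⟦X⟧) * X ^ (r - 1 + k) *
        (X * d⁄dX K (Y ^ r) + ((r + k : ℕ) : K⟦X⟧) * Y ^ r)) :
    (1 - C (B : K) * Y ^ (r - 1) * X ^ (r - 1 + k)) * X * d⁄dX K Y =
      (C ((q : K) - 1) + C ((B : K) * (r + k) / r) * Y ^ (r - 1) * X ^ (r - 1 + k)) * Y := by
  obtain ⟨p, rfl⟩ : ∃ p, q = p + 1 := ⟨q - 1, by omega⟩
  obtain ⟨s, rfl⟩ : ∃ s, r = s + 1 := ⟨r - 1, by omega⟩
  simp only [Nat.add_sub_cancel] at hsym ⊢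
  have hpowY :
      X * d⁄dX K (Y ^ (s + 1)) = ((s + 1 : ℕ) : K⟦X⟧) * Y ^ s * (X * d⁄dX K Y) := by
    rw [derivative_pow]
    push_cast
    ring
  have hu : ((s + 1 : ℕ) : K⟦X⟧) * C ((s + 1 : ℕ) : K)⁻¹ = 1 := by
    rw [← map_natCast C, ← map_mul, mul_inv_cancel₀ (Nat.cast_ne_zero.mpr s.succ_ne_zero),
      map_one]
  rw [hpowY, pow_succ] at hsym
  simp only [div_eq_mul_inv, map_mul, map_sub, map_add, map_natCast, map_one]
  push_cast at hsym hu ⊢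
  linear_combination C ((s : K) + 1)⁻¹ * hsym
    - (X * d⁄dX K Y - p * Y - B * X ^ (s + k) * Y ^ s * (X * d⁄dX K Y)) * hu

theorem leaky_one_part_ODE_general
    (q r k : ℕ) (hq : 0 < q) (hr : 0 < r) (hk : 0 < k)
    (B : ℕ) (hB : B = q * (r - 1) + k)
    (a : ℕ → ℚ)
    (harec : ∀ b : ℕ, 1 ≤ b → a b = (1 / r : ℚ) *
      ∑ t ∈ Finset.Nat.antidiagonalTuple r (b - 1),
        (((b - 1)! : ℚ) / ∏ j, ((t j)! : ℚ)) *
          ∏ j, (((B * t j + q : ℕ) : ℚ) * a (t j)))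
    (Y : PowerSeries ℚ)
    (hYcoeff : ∀ b : ℕ,
      PowerSeries.coeff (R := ℚ) (B * b + q - 1) Y = ((B * b + q : ℕ) : ℚ) * a b / (b)!)
    (hYzero : ∀ n : ℕ, (∀ b : ℕ, n ≠ B * b + q - 1) → PowerSeries.coeff (R := ℚ) n Y = 0) :
    (1 - PowerSeries.C (R := ℚ) (B : ℚ) * Y ^ (r - 1) * PowerSeries.X ^ (r - 1 + k)) *
        PowerSeries.X * PowerSeries.derivative ℚ Y =
      (PowerSeries.C (R := ℚ) ((q : ℚ) - 1) +
          PowerSeries.C (R := ℚ) ((B : ℚ) * (r + k) / r) * Y ^ (r - 1) *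
            PowerSeries.X ^ (r - 1 + k)) * Y := by
  have hB0 : B ≠ 0 := by omega
  have hshift (b : ℕ) : B * b + q - 1 = B * b + (q - 1) := by omega
  have hY : Y = X ^ (q - 1) * expand B hB0 (weightedEGF B q a) :=
    eq_X_pow_mul_expand_mk hB0 (fun b => by rw [← hshift, hYcoeff])
      (fun n hn => hYzero n fun b => by rw [hshift]; exact hn b)
  have hZ := natCast_mul_derivative_weightedEGF (coeff_weightedEGF_pow_of_cutAndJoin hr.ne' harec)
  exact leaky_ode_of_natCast_mul_X_mul_derivative_sub hq hr
    (natCast_mul_X_mul_derivative_sub_of_eq_X_pow_mul_expand hq hr hB hB0 hZ hY)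

/-- Let `q, r, k` be positive integers, `B = q(r-1)+k`, let
`a : ℕ → ℚ` be the genus-0 one-part `(k,r,q)`-leaky completed-cycles Hurwitz
numbers (determined by `a 0 = 1/q` and the tropical cut-and-join recursion),
and let `Y = Σ_{b≥0} ((B·b+q)·a(b)/b!) · X^{B·b+q-1} ∈ ℚ⟦X⟧`.  Then `Y`
satisfies the first-order differential equation
`(1 - B·Y^{r-1}·X^{r-1+k}) · X · Y' = ((q-1) + (B·(r+k)/r)·Y^{r-1}·X^{r-1+k}) · Y`
in `ℚ⟦X⟧`, where `Y'` is the formal derivative of `Y`. -/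
theorem leaky_one_part_ODE
    (q r k : ℕ) (hq : 0 < q) (hr : 0 < r) (hk : 0 < k)
    (B : ℕ) (hB : B = q * (r - 1) + k)
    (a : ℕ → ℚ)
    (ha0 : a 0 = 1 / q)
    (harec : ∀ b : ℕ, 1 ≤ b → a b = (1 / r : ℚ) *
      ∑ t ∈ Finset.Nat.antidiagonalTuple r (b - 1),
        (((b - 1)! : ℚ) / ∏ j, ((t j)! : ℚ)) *
          ∏ j, (((B * t j + q : ℕ) : ℚ) * a (t j)))
    (Y : PowerSeries ℚ)
    (hYcoeff : ∀ b : ℕ,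
      PowerSeries.coeff (R := ℚ) (B * b + q - 1) Y = ((B * b + q : ℕ) : ℚ) * a b / (b)!)
    (hYzero : ∀ n : ℕ, (∀ b : ℕ, n ≠ B * b + q - 1) → PowerSeries.coeff (R := ℚ) n Y = 0) :
    (1 - PowerSeries.C (R := ℚ) (B : ℚ) * Y ^ (r - 1) * PowerSeries.X ^ (r - 1 + k)) *
        PowerSeries.X * PowerSeries.derivative ℚ Y =
      (PowerSeries.C (R := ℚ) ((q : ℚ) - 1) +
          PowerSeries.C (R := ℚ) ((B : ℚ) * (r + k) / r) * Y ^ (r - 1) *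
            PowerSeries.X ^ (r - 1 + k)) * Y :=
  leaky_one_part_ODE_general q r k hq hr hk B hB a harec Y hYcoeff hYzero
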